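/- arXiv:math/0503574 — 3 statements merged into one kernel-verified Lean document; each statement's English description precedes it below -/
import Mathlib

section
/- Let X be a reflexive real Banach space, L an anti-selfdual Lagrangian on X × X* such that for every p ∈ X* the function x ↦ L(x,p) is bounded on bounded subsets of X, and let A : D(A) ⊆ X → X* be skew-adjoint modulo the boundary operators (b₁,b₂) : D(b₁,b₂) ⊆ X → H₁ × H₂. Define M : X × X* → ℝ ∪ {+∞} by M(x,p) = L(x, Ax + p) + ½‖b₁(x)‖²_{H₁} + ½‖b₂(x)‖²_{H₂} if x ∈ D(A) ∩ D(b₁,b₂), and M(x,p) = +∞ otherwise. Then M is an anti-selfdual Lagrangian on X × X*. -/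
open scoped RealInnerProductSpace

noncomputable section

/-- Convexity for `EReal`-valued functions. -/
def ERealConvexOn {E : Type*} [AddCommGroup E] [Module ℝ E] (f : E → EReal) : Prop :=
  ∀ x y : E, ∀ s t : ℝ, 0 ≤ s → 0 ≤ t → s + t = 1 →
    f (s • x + t • y) ≤ (s : EReal) * f x + (t : EReal) * f y

/-- The Legendre–Fenchel dual, in both variables, of a Lagrangian `L` on `X × X*`. -/
def lagrangianDual {X : Type*} [NormedAddCommGroup X] [NormedSpace ℝ X]
    (L : X × (X →L[ℝ] ℝ) → EReal) (q : X →L[ℝ] ℝ) (y : X) : EReal :=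
  ⨆ x : X, ⨆ p : X →L[ℝ] ℝ, ((q x + p y : ℝ) : EReal) - L (x, p)

/-- A Lagrangian is anti-selfdual if `L*(p,x) = L(−x,−p)` for all `(p,x)`. -/
def IsASD {X : Type*} [NormedAddCommGroup X] [NormedSpace ℝ X]
    (L : X × (X →L[ℝ] ℝ) → EReal) : Prop :=
  ∀ (p : X →L[ℝ] ℝ) (x : X), lagrangianDual L p x = L (-x, -p)

/-- Reflexivity of a normed space. -/
def IsReflexiveSpace (X : Type*) [NormedAddCommGroup X] [NormedSpace ℝ X] : Prop :=
  ∀ F : (X →L[ℝ] ℝ) →L[ℝ] ℝ, ∃ x : X, ∀ p : X →L[ℝ] ℝ, F p = p x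

/-- `A : D(A) ⊆ X → X*` is skew-adjoint modulo the boundary operators
`(b₁,b₂) : D(b₁,b₂) ⊆ X → H₁ × H₂`. -/
def SkewAdjointModBoundary {X H₁ H₂ : Type*}
    [NormedAddCommGroup X] [NormedSpace ℝ X]
    [NormedAddCommGroup H₁] [InnerProductSpace ℝ H₁]
    [NormedAddCommGroup H₂] [InnerProductSpace ℝ H₂]
    (DA Db : Subspace ℝ X)
    (A : DA →ₗ[ℝ] (X →L[ℝ] ℝ))
    (b₁ : Db →ₗ[ℝ] H₁) (b₂ : Db →ₗ[ℝ] H₂) : Prop :=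
  -- (1) S = D(A) ∩ D(b₁,b₂) is dense in X
  Dense {x : X | x ∈ DA ∧ x ∈ Db} ∧
  -- (2) ker(b₁,b₂) ∩ D(A) is dense in X
  Dense {x : X | ∃ h : x ∈ DA ∧ x ∈ Db, b₁ ⟨x, h.2⟩ = 0 ∧ b₂ ⟨x, h.2⟩ = 0} ∧
  -- (3) the image of S under (b₁,b₂) is dense in H₁ × H₂
  Dense {vw : H₁ × H₂ | ∃ (x : X) (h : x ∈ DA ∧ x ∈ Db), vw = (b₁ ⟨x, h.2⟩, b₂ ⟨x, h.2⟩)} ∧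
  -- (4) y ∈ S iff the corresponding supremum is finite
  (∀ y : X, (y ∈ DA ∧ y ∈ Db) ↔
    BddAbove {r : ℝ | ∃ (x : X) (h : x ∈ DA ∧ x ∈ Db), ‖x‖ < 1 ∧
      r = A ⟨x, h.1⟩ y - (‖b₁ ⟨x, h.2⟩‖ ^ 2 + ‖b₂ ⟨x, h.2⟩‖ ^ 2) / 2}) ∧
  -- (5) integration by parts formula on S
  (∀ (x y : X) (hx : x ∈ DA ∧ x ∈ Db) (hy : y ∈ DA ∧ y ∈ Db),
    A ⟨x, hx.1⟩ y = -(A ⟨y, hy.1⟩ x)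
      + ⟪b₁ ⟨x, hx.2⟩, b₁ ⟨y, hy.2⟩⟫ - ⟪b₂ ⟨x, hx.2⟩, b₂ ⟨y, hy.2⟩⟫)

/-!
On the domain `S = D(A) ∩ D(b₁,b₂)` Green's formula gives, for `x y ∈ S`,
`⟨q,x⟩ + ⟨p,y⟩ - M(x,p) = ⟨Ay+q,x⟩ + ⟨Ax+p,y⟩ - L(x,Ax+p) + ½‖b₁y‖² + ½‖b₂y‖²
  - ½‖b₁x + b₁y‖² - ½‖b₂x - b₂y‖²`.
Hence, for `y ∈ S`, `M*(q,y) ≤ L*(Ay+q,y) + ½‖b₁y‖² + ½‖b₂y‖² = M(-y,-q)`. Conversely, the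
density of `ker(b₁,b₂) ∩ D(A)` and of the range of `(b₁,b₂)` approximate any `x₀ ∈ X` by `x ∈ S`
with `(b₁x, b₂x)` close to `(-b₁y, b₂y)`, and `L(·,r)`, convex and bounded on bounded sets, is
continuous; so the defect terms can be made small at no cost. For `y ∉ S`, testing `M*(q,y)` at
the points `(-x, Ax)` with `‖x‖ < 1` gives `+∞` by condition (4).
-/

open Set Metric Filter Topology

lemma ERealConvexOn.convexOn_fst {E F : Type*} [AddCommGroup E] [Module ℝ E] [AddCommGroup F]
    [Module ℝ F] {f : E × F → ℝ} (hf : ERealConvexOn fun z => (f z : EReal)) (p : F) :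
    ConvexOn ℝ univ fun x => f (x, p) := by
  refine ⟨convex_univ, fun x _ y _ a b ha hb hab => ?_⟩
  have h := hf (x, p) (y, p) a b ha hb hab
  rw [Prod.smul_mk, Prod.smul_mk, Prod.mk_add_mk, ← add_smul, hab, one_smul] at h
  exact EReal.coe_le_coe_iff.1 h

lemma ConvexOn.continuous_of_bddAbove_ball {E : Type*} [NormedAddCommGroup E] [NormedSpace ℝ E]
    {f : E → ℝ} (hf : ConvexOn ℝ univ f) {x₀ : E} {r : ℝ} (hr : 0 < r)
    (hbdd : BddAbove (f '' ball x₀ r)) : Continuous f := by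
  obtain ⟨C, hC⟩ := hbdd
  have hloc : (𝓝 x₀).IsBoundedUnder (· ≤ ·) f :=
    isBoundedUnder_of_eventually_le <| eventually_of_mem (ball_mem_nhds x₀ hr) fun x hx =>
      hC (mem_image_of_mem f hx)
  have htfae := (hf.continuousOn_tfae isOpen_univ univ_nonempty).out 3 1
  exact continuousOn_univ.1 (htfae.1 ⟨x₀, mem_univ _, hloc⟩)

section Lagrangian

variable {X : Type*} [NormedAddCommGroup X] [NormedSpace ℝ X] {ℓ : X × (X →L[ℝ] ℝ) → ℝ}

lemma lagrangianDual_coe (q : X →L[ℝ] ℝ) (y : X) :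
    lagrangianDual (fun z => (ℓ z : EReal)) q y
      = ⨆ (x : X) (p : X →L[ℝ] ℝ), ((q x + p y - ℓ (x, p) : ℝ) : EReal) := by
  simp only [lagrangianDual, EReal.coe_sub]

lemma IsASD.apply_add_apply_sub_le (h : IsASD fun z => (ℓ z : EReal)) (x y : X)
    (p q : X →L[ℝ] ℝ) : q x + p y - ℓ (x, p) ≤ ℓ (-y, -q) := by
  have hq := h q y
  rw [lagrangianDual_coe] at hq
  exact EReal.coe_le_coe_iff.1
    ((le_iSup₂ (f := fun x p => ((q x + p y - ℓ (x, p) : ℝ) : EReal)) x p).trans_eq hq)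

end Lagrangian

section Boundary

variable {X H₁ H₂ : Type*} [NormedAddCommGroup X] [NormedSpace ℝ X]
  [NormedAddCommGroup H₁] [InnerProductSpace ℝ H₁] [NormedAddCommGroup H₂] [InnerProductSpace ℝ H₂]
  {S : Submodule ℝ X} (A : S →ₗ[ℝ] X →L[ℝ] ℝ) (b₁ : S →ₗ[ℝ] H₁) (b₂ : S →ₗ[ℝ] H₂)
  (ℓ : X × (X →L[ℝ] ℝ) → ℝ)

def boundaryEnergy (x : S) : ℝ := ‖b₁ x‖ ^ 2 / 2 + ‖b₂ x‖ ^ 2 / 2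

open Classical in
def boundaryLagrangian (z : X × (X →L[ℝ] ℝ)) : EReal :=
  if h : z.1 ∈ S then ((ℓ (z.1, A ⟨z.1, h⟩ + z.2) + boundaryEnergy b₁ b₂ ⟨z.1, h⟩ : ℝ) : EReal)
  else ⊤

variable {A b₁ b₂ ℓ}

lemma boundaryEnergy_neg (x : S) : boundaryEnergy b₁ b₂ (-x) = boundaryEnergy b₁ b₂ x := by
  simp only [boundaryEnergy, map_neg, norm_neg]

lemma boundaryLagrangian_coe (x : S) (p : X →L[ℝ] ℝ) :
    boundaryLagrangian A b₁ b₂ ℓ (x, p) = ((ℓ (x, A x + p) + boundaryEnergy b₁ b₂ x : ℝ) : EReal) :=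
  dif_pos x.2

lemma boundaryLagrangian_of_notMem {x : X} (hx : x ∉ S) (p : X →L[ℝ] ℝ) :
    boundaryLagrangian A b₁ b₂ ℓ (x, p) = ⊤ :=
  dif_neg hx

lemma lagrangianDual_boundaryLagrangian (q : X →L[ℝ] ℝ) (y : X) :
    lagrangianDual (boundaryLagrangian A b₁ b₂ ℓ) q y
      = ⨆ (x : S) (p : X →L[ℝ] ℝ),
          ((q x + p y - (ℓ (x, A x + p) + boundaryEnergy b₁ b₂ x) : ℝ) : EReal) := by
  apply le_antisymm
  · refine iSup₂_le fun x p => ?_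
    by_cases hx : x ∈ S
    · lift x to S using hx
      rw [boundaryLagrangian_coe, ← EReal.coe_sub]
      exact le_iSup₂ (f := fun (x : S) p =>
        ((q x + p y - (ℓ (x, A x + p) + boundaryEnergy b₁ b₂ x) : ℝ) : EReal)) x p
    · simp [boundaryLagrangian_of_notMem hx]
  · refine iSup₂_le fun x p => ?_
    rw [EReal.coe_sub, ← boundaryLagrangian_coe]
    exact le_iSup₂ (f := fun x p => ((q x + p y : ℝ) : EReal) - boundaryLagrangian A b₁ b₂ ℓ (x, p))
      (x : X) p

lemma pairing_sub_boundaryLagrangian_eq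
    (hibp : ∀ x y : S, A x y = -A y x + ⟪b₁ x, b₁ y⟫ - ⟪b₂ x, b₂ y⟫)
    (x y : S) (p q : X →L[ℝ] ℝ) :
    q x + p y - (ℓ (x, A x + p) + boundaryEnergy b₁ b₂ x)
      = (A y + q) x + (A x + p) y - ℓ (x, A x + p) + boundaryEnergy b₁ b₂ y
        - (‖b₁ x + b₁ y‖ ^ 2 / 2 + ‖b₂ x - b₂ y‖ ^ 2 / 2) := by
  simp only [add_apply, boundaryEnergy, norm_add_sq_real, norm_sub_sq_real, hibp x y]
  ring

lemma denseRange_graph_boundary (hker : Dense (Subtype.val '' {x : S | b₁ x = 0 ∧ b₂ x = 0}))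
    (hrange : DenseRange fun x : S => (b₁ x, b₂ x)) :
    DenseRange fun x : S => ((x : X), b₁ x, b₂ x) := by
  rw [Metric.denseRange_iff] at hrange ⊢
  rintro ⟨x₀, v, w⟩ ε hε
  obtain ⟨z, hz⟩ := hrange (v, w) ε hε
  obtain ⟨_, hu, ⟨u, ⟨hu₁, hu₂⟩, rfl⟩⟩ := Metric.dense_iff.1 hker (x₀ - z) ε hε
  refine ⟨u + z, ?_⟩
  have hdist : dist x₀ ((u + z : S) : X) = dist (u : X) (x₀ - z) := by
    rw [dist_eq_norm, dist_eq_norm, Submodule.coe_add, ← norm_neg]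
    congr 1
    abel
  rw [Prod.dist_eq, map_add, map_add, hu₁, hu₂, zero_add, zero_add, max_lt_iff, hdist]
  exact ⟨mem_ball.1 hu, hz⟩

lemma exists_lt_of_denseRange_graph_boundary {r : X →L[ℝ] ℝ} (hcont : Continuous fun x => ℓ (x, r))
    (hdense : DenseRange fun x : S => ((x : X), b₁ x, b₂ x)) (y : S) (P : X →L[ℝ] ℝ) (x₀ : X)
    {c : ℝ} (hc : c < P x₀ + r y - ℓ (x₀, r)) :
    ∃ x : S, c < P x + r y - ℓ (x, r) - (‖b₁ x + b₁ y‖ ^ 2 / 2 + ‖b₂ x - b₂ y‖ ^ 2 / 2) := by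
  let G : X × H₁ × H₂ → ℝ := fun z =>
    P z.1 + r y - ℓ (z.1, r) - (‖z.2.1 + b₁ y‖ ^ 2 / 2 + ‖z.2.2 - b₂ y‖ ^ 2 / 2)
  have hG : Continuous G := by
    have hfst : Continuous fun z : X × H₁ × H₂ => ℓ (z.1, r) := hcont.comp continuous_fst
    exact (((P.continuous.comp continuous_fst).add continuous_const).sub hfst).sub (by fun_prop)
  have hx₀ : (x₀, -b₁ y, b₂ y) ∈ G ⁻¹' Ioi c := by simpa [G] using hc
  exact hdense.exists_mem_open (isOpen_Ioi.preimage hG) ⟨(x₀, -b₁ y, b₂ y), hx₀⟩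

lemma lagrangianDual_boundaryLagrangian_le (hASD : IsASD fun z => (ℓ z : EReal))
    (hibp : ∀ x y : S, A x y = -A y x + ⟪b₁ x, b₁ y⟫ - ⟪b₂ x, b₂ y⟫) (q : X →L[ℝ] ℝ) (y : S) :
    lagrangianDual (boundaryLagrangian A b₁ b₂ ℓ) q y
      ≤ ((ℓ (-(y : X), -(A y + q)) + boundaryEnergy b₁ b₂ y : ℝ) : EReal) := by
  rw [lagrangianDual_boundaryLagrangian]
  refine iSup₂_le fun x p => EReal.coe_le_coe_iff.2 ?_
  have hFY := hASD.apply_add_apply_sub_le x y (A x + p) (A y + q)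
  rw [pairing_sub_boundaryLagrangian_eq hibp]
  nlinarith [sq_nonneg ‖b₁ x + b₁ y‖, sq_nonneg ‖b₂ x - b₂ y‖]

lemma le_lagrangianDual_boundaryLagrangian (hASD : IsASD fun z => (ℓ z : EReal))
    (hcont : ∀ p, Continuous fun x => ℓ (x, p))
    (hdense : DenseRange fun x : S => ((x : X), b₁ x, b₂ x))
    (hibp : ∀ x y : S, A x y = -A y x + ⟪b₁ x, b₁ y⟫ - ⟪b₂ x, b₂ y⟫) (q : X →L[ℝ] ℝ) (y : S) :
    ((ℓ (-(y : X), -(A y + q)) + boundaryEnergy b₁ b₂ y : ℝ) : EReal)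
      ≤ lagrangianDual (boundaryLagrangian A b₁ b₂ ℓ) q y := by
  refine EReal.ge_of_forall_gt_iff_ge.1 fun c hc => ?_
  obtain ⟨x₀, r, hr⟩ : ∃ x₀ r, c - boundaryEnergy b₁ b₂ y < (A y + q) x₀ + r y - ℓ (x₀, r) := by
    have h : ((c - boundaryEnergy b₁ b₂ y : ℝ) : EReal)
        < lagrangianDual (fun z => (ℓ z : EReal)) (A y + q) (y : X) := by
      rw [hASD]
      exact EReal.coe_lt_coe_iff.2 (by linarith [EReal.coe_lt_coe_iff.1 hc])
    simp only [lagrangianDual_coe, lt_iSup_iff, EReal.coe_lt_coe_iff] at h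
    exact h
  obtain ⟨x, hx⟩ := exists_lt_of_denseRange_graph_boundary (hcont r) hdense y _ x₀ hr
  rw [lagrangianDual_boundaryLagrangian]
  refine le_iSup₂_of_le x (r - A x) (EReal.coe_le_coe_iff.2 ?_)
  rw [pairing_sub_boundaryLagrangian_eq hibp, add_sub_cancel]
  linarith

lemma lagrangianDual_boundaryLagrangian_of_notMem
    (hbdd : BddAbove ((fun x => ℓ (x, 0)) '' ball 0 1))
    (hdom : ∀ y : X, BddAbove ((fun x : S => A x y - boundaryEnergy b₁ b₂ x) ''
      {x | ‖(x : X)‖ < 1}) → y ∈ S)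
    (q : X →L[ℝ] ℝ) {y : X} (hy : y ∉ S) :
    lagrangianDual (boundaryLagrangian A b₁ b₂ ℓ) q y = ⊤ := by
  obtain ⟨C, hC⟩ := hbdd
  refine (EReal.eq_top_iff_forall_lt _).2 fun c => ?_
  obtain ⟨_, ⟨x, hx, rfl⟩, hcx⟩ := not_bddAbove_iff.1 (mt (hdom y) hy) (c + ‖q‖ + C)
  have hℓ : ℓ (-x, 0) ≤ C := hC (mem_image_of_mem _ (by simpa using hx))
  have hq : |q x| ≤ ‖q‖ :=
    (q.le_opNorm x).trans (mul_le_of_le_one_right (norm_nonneg q) (le_of_lt hx))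
  rw [lagrangianDual_boundaryLagrangian]
  refine lt_iSup_iff.2 ⟨-x, lt_iSup_iff.2 ⟨A x, EReal.coe_lt_coe_iff.2 ?_⟩⟩
  rw [map_neg, neg_add_cancel, boundaryEnergy_neg, Submodule.coe_neg, map_neg]
  linarith [abs_le.1 hq]

theorem isASD_boundaryLagrangian (hASD : IsASD fun z => (ℓ z : EReal))
    (hcont : ∀ p, Continuous fun x => ℓ (x, p))
    (hbdd : BddAbove ((fun x => ℓ (x, 0)) '' ball 0 1))
    (hker : Dense (Subtype.val '' {x : S | b₁ x = 0 ∧ b₂ x = 0}))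
    (hrange : DenseRange fun x : S => (b₁ x, b₂ x))
    (hdom : ∀ y : X, BddAbove ((fun x : S => A x y - boundaryEnergy b₁ b₂ x) ''
      {x | ‖(x : X)‖ < 1}) → y ∈ S)
    (hibp : ∀ x y : S, A x y = -A y x + ⟪b₁ x, b₁ y⟫ - ⟪b₂ x, b₂ y⟫) :
    IsASD (boundaryLagrangian A b₁ b₂ ℓ) := by
  intro q y
  by_cases hy : y ∈ S
  · lift y to S using hy
    rw [← Submodule.coe_neg, boundaryLagrangian_coe, map_neg, ← neg_add, boundaryEnergy_neg,
      Submodule.coe_neg]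
    exact le_antisymm (lagrangianDual_boundaryLagrangian_le hASD hibp q y)
      (le_lagrangianDual_boundaryLagrangian hASD hcont (denseRange_graph_boundary hker hrange)
        hibp q y)
  · rw [lagrangianDual_boundaryLagrangian_of_notMem hbdd hdom q hy,
      boundaryLagrangian_of_notMem (fun h => hy (by simpa using S.neg_mem h))]

end Boundary

section Restriction

variable {X H₁ H₂ : Type*} [NormedAddCommGroup X] [NormedSpace ℝ X]
  [NormedAddCommGroup H₁] [InnerProductSpace ℝ H₁] [NormedAddCommGroup H₂] [InnerProductSpace ℝ H₂]
  {DA Db : Subspace ℝ X} {A : DA →ₗ[ℝ] (X →L[ℝ] ℝ)} {b₁ : Db →ₗ[ℝ] H₁} {b₂ : Db →ₗ[ℝ] H₂}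

lemma SkewAdjointModBoundary.isASD_boundaryLagrangian (hA : SkewAdjointModBoundary DA Db A b₁ b₂)
    {ℓ : X × (X →L[ℝ] ℝ) → ℝ} (hASD : IsASD fun z => (ℓ z : EReal))
    (hcont : ∀ p, Continuous fun x => ℓ (x, p))
    (hbdd : BddAbove ((fun x => ℓ (x, 0)) '' ball 0 1)) :
    IsASD (boundaryLagrangian (A ∘ₗ Submodule.inclusion inf_le_left)
      (b₁ ∘ₗ Submodule.inclusion inf_le_right) (b₂ ∘ₗ Submodule.inclusion inf_le_right) ℓ) := by
  obtain ⟨-, hker, hrange, hdom, hibp⟩ := hA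
  refine _root_.isASD_boundaryLagrangian hASD hcont hbdd (hker.mono ?_) (hrange.mono ?_)
    (fun y hy => (hdom y).2 (hy.mono ?_)) (fun x y => hibp x y x.2 y.2)
  · rintro x ⟨hx, h₁, h₂⟩
    exact ⟨⟨x, hx⟩, ⟨h₁, h₂⟩, rfl⟩
  · rintro _ ⟨x, hx, rfl⟩
    exact ⟨⟨x, hx⟩, rfl⟩
  · rintro _ ⟨x, hx, hx₁, rfl⟩
    refine ⟨⟨x, hx⟩, hx₁, ?_⟩
    change A ⟨x, hx.1⟩ y - (‖b₁ ⟨x, hx.2⟩‖ ^ 2 / 2 + ‖b₂ ⟨x, hx.2⟩‖ ^ 2 / 2) = _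
    ring

end Restriction

theorem stmt1_general {X H₁ H₂ : Type*}
    [NormedAddCommGroup X] [NormedSpace ℝ X]
    [NormedAddCommGroup H₁] [InnerProductSpace ℝ H₁]
    [NormedAddCommGroup H₂] [InnerProductSpace ℝ H₂]
    (L : X × (X →L[ℝ] ℝ) → EReal)
    (hconv : ERealConvexOn L)
    (hreal : ∀ z, L z ≠ ⊥)
    (hASD : IsASD L)
    (hbdd : ∀ (p : X →L[ℝ] ℝ) (r : ℝ), ∃ C : ℝ, ∀ x : X, ‖x‖ ≤ r → L (x, p) ≤ (C : EReal))
    (DA Db : Subspace ℝ X)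
    (A : DA →ₗ[ℝ] (X →L[ℝ] ℝ))
    (b₁ : Db →ₗ[ℝ] H₁) (b₂ : Db →ₗ[ℝ] H₂)
    (hA : SkewAdjointModBoundary DA Db A b₁ b₂)
    (M : X × (X →L[ℝ] ℝ) → EReal)
    (hM₁ : ∀ (x : X) (p : X →L[ℝ] ℝ) (h : x ∈ DA ∧ x ∈ Db),
      M (x, p) = L (x, A ⟨x, h.1⟩ + p)
        + ((‖b₁ ⟨x, h.2⟩‖ ^ 2 / 2 + ‖b₂ ⟨x, h.2⟩‖ ^ 2 / 2 : ℝ) : EReal))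
    (hM₂ : ∀ (x : X) (p : X →L[ℝ] ℝ), ¬(x ∈ DA ∧ x ∈ Db) → M (x, p) = ⊤) :
    IsASD M := by
  obtain ⟨ℓ, rfl⟩ : ∃ ℓ : X × (X →L[ℝ] ℝ) → ℝ, L = fun z => (ℓ z : EReal) := by
    refine ⟨fun z => (L z).toReal, funext fun z => (EReal.coe_toReal ?_ (hreal z)).symm⟩
    obtain ⟨C, hC⟩ := hbdd z.2 ‖z.1‖
    exact ne_top_of_le_ne_top (EReal.coe_ne_top C) (hC z.1 le_rfl)
  have hbddℓ : ∀ p, BddAbove ((fun x => ℓ (x, p)) '' ball 0 1) := fun p => by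
    obtain ⟨C, hC⟩ := hbdd p 1
    refine ⟨C, forall_mem_image.2 fun x hx => ?_⟩
    exact EReal.coe_le_coe_iff.1 (hC x (mem_ball_zero_iff.1 hx).le)
  obtain rfl : M = boundaryLagrangian (A ∘ₗ Submodule.inclusion inf_le_left)
      (b₁ ∘ₗ Submodule.inclusion inf_le_right) (b₂ ∘ₗ Submodule.inclusion inf_le_right) ℓ := by
    funext ⟨x, p⟩
    by_cases hx : x ∈ DA ∧ x ∈ Db
    · rw [hM₁ x p hx, boundaryLagrangian_coe (⟨x, hx⟩ : ↥(DA ⊓ Db)) p, EReal.coe_add]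
      rfl
    · rw [hM₂ x p hx, boundaryLagrangian_of_notMem hx p]
  exact hA.isASD_boundaryLagrangian hASD
    (fun p => (hconv.convexOn_fst p).continuous_of_bddAbove_ball one_pos (hbddℓ p)) (hbddℓ 0)

/-- composing an ASD Lagrangian with an unbounded operator that is skew-adjoint
modulo boundary operators, adding the corresponding boundary terms, yields an ASD Lagrangian. -/
theorem stmt1 {X H₁ H₂ : Type*}
    [NormedAddCommGroup X] [NormedSpace ℝ X] [CompleteSpace X]
    [NormedAddCommGroup H₁] [InnerProductSpace ℝ H₁] [CompleteSpace H₁]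
    [NormedAddCommGroup H₂] [InnerProductSpace ℝ H₂] [CompleteSpace H₂]
    (hrefl : IsReflexiveSpace X)
    (L : X × (X →L[ℝ] ℝ) → EReal)
    (hconv : ERealConvexOn L)
    (hlsc : LowerSemicontinuous L)
    (hproper : ∃ z, L z ≠ ⊤) (hreal : ∀ z, L z ≠ ⊥)
    (hASD : IsASD L)
    (hbdd : ∀ (p : X →L[ℝ] ℝ) (r : ℝ), ∃ C : ℝ, ∀ x : X, ‖x‖ ≤ r → L (x, p) ≤ (C : EReal))
    (DA Db : Subspace ℝ X)
    (A : DA →ₗ[ℝ] (X →L[ℝ] ℝ))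
    (b₁ : Db →ₗ[ℝ] H₁) (b₂ : Db →ₗ[ℝ] H₂)
    (hA : SkewAdjointModBoundary DA Db A b₁ b₂)
    (M : X × (X →L[ℝ] ℝ) → EReal)
    (hM₁ : ∀ (x : X) (p : X →L[ℝ] ℝ) (h : x ∈ DA ∧ x ∈ Db),
      M (x, p) = L (x, A ⟨x, h.1⟩ + p)
        + ((‖b₁ ⟨x, h.2⟩‖ ^ 2 / 2 + ‖b₂ ⟨x, h.2⟩‖ ^ 2 / 2 : ℝ) : EReal))
    (hM₂ : ∀ (x : X) (p : X →L[ℝ] ℝ), ¬(x ∈ DA ∧ x ∈ Db) → M (x, p) = ⊤) :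
    IsASD M :=
  stmt1_general L hconv hreal hASD hbdd DA Db A b₁ b₂ hA M hM₁ hM₂
end
end

section
/- Let X be a reflexive real Banach space, φ : X → ℝ ∪ {+∞} a proper convex lower semicontinuous function whose effective domain D(φ) = {x : φ(x) < +∞} is symmetric (x ∈ D(φ) implies −x ∈ D(φ)), and let A : D(A) ⊆ X → X* be a linear antisymmetric operator with D(φ) ⊆ D(A). Then the Lagrangian M defined by M(x,p) = φ(x) + φ*(Ax − p) for x ∈ D(φ) and M(x,p) = +∞ otherwise, is anti-selfdual on X × X*. -/
noncomputable section

/-- The Legendre conjugate of `φ : X → ℝ ∪ {+∞}`, as a function on `X*`. -/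
def legendreConj {X : Type*} [NormedAddCommGroup X] [NormedSpace ℝ X]
    (φ : X → EReal) (q : X →L[ℝ] ℝ) : EReal :=
  ⨆ x : X, ((q x : ℝ) : EReal) - φ x

set_option linter.unusedSectionVars false

namespace FMaux

variable {X : Type*} [NormedAddCommGroup X] [NormedSpace ℝ X] (φ : X → EReal)

/-- biconjugate at a point -/
def biconj (y : X) : EReal := ⨆ q : X →L[ℝ] ℝ, ((q y : ℝ) : EReal) - legendreConj φ q

lemma le_lc (q : X →L[ℝ] ℝ) (x : X) : ((q x : ℝ) : EReal) - φ x ≤ legendreConj φ q :=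
  le_iSup (fun x => ((q x : ℝ) : EReal) - φ x) x

lemma lc_ne_bot (hproper : ∃ x, φ x ≠ ⊤) (hreal : ∀ x, φ x ≠ ⊥) (q : X →L[ℝ] ℝ) :
    legendreConj φ q ≠ ⊥ := by
  obtain ⟨x₀, h₀⟩ := hproper
  have h : ((q x₀ - (φ x₀).toReal : ℝ) : EReal) ≤ legendreConj φ q := by
    have := le_lc φ q x₀
    rwa [← EReal.coe_toReal h₀ (hreal x₀), ← EReal.coe_sub] at this
  intro hbot
  rw [hbot] at h
  exact (EReal.coe_ne_bot _) (le_bot_iff.1 h)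

lemma fenchelYoung (hreal : ∀ x, φ x ≠ ⊥) (q : X →L[ℝ] ℝ) (y : X) :
    ((q y : ℝ) : EReal) - legendreConj φ q ≤ φ y := by
  by_cases hT : φ y = ⊤
  · rw [hT]; exact le_top
  · have hy : φ y = ((φ y).toReal : EReal) := (EReal.coe_toReal hT (hreal y)).symm
    by_cases hL : legendreConj φ q = ⊤
    · rw [hL, EReal.sub_top]; exact bot_le
    · have hLb : legendreConj φ q ≠ ⊥ := by
        intro h
        have := le_lc φ q y
        rw [h, hy, ← EReal.coe_sub, le_bot_iff] at this
        exact EReal.coe_ne_bot _ this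
      have hLr : legendreConj φ q = ((legendreConj φ q).toReal : EReal) :=
        (EReal.coe_toReal hL hLb).symm
      have key := le_lc φ q y
      rw [hy, ← EReal.coe_sub, hLr, EReal.coe_le_coe_iff] at key
      rw [hLr, ← EReal.coe_sub, hy, EReal.coe_le_coe_iff]
      linarith

lemma biconj_le (hreal : ∀ x, φ x ≠ ⊥) (y : X) : biconj φ y ≤ φ y :=
  iSup_le fun q => fenchelYoung φ hreal q y

lemma le_of_forall_real_lt {a b : EReal} (h : ∀ c : ℝ, (c : EReal) < a → (c : EReal) ≤ b) :
    a ≤ b := by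
  by_contra hcon
  obtain ⟨c, hbc, hca⟩ := EReal.exists_between_coe_real (not_le.1 hcon)
  exact absurd (h c hca) (not_le.2 hbc)

lemma eq_top_of_forall_real_le {b : EReal} (h : ∀ c : ℝ, (c : EReal) ≤ b) : b = ⊤ := by
  by_contra hcon
  obtain ⟨c, hbc, _⟩ := EReal.exists_between_coe_real (lt_top_iff_ne_top.2 hcon)
  exact absurd (h c) (not_le.2 hbc)


variable {X : Type*} [NormedAddCommGroup X] [NormedSpace ℝ X] (φ : X → EReal)

lemma epi_convex (hconv : ERealConvexOn φ) :
    Convex ℝ {p : X × ℝ | φ p.1 ≤ (p.2 : EReal)} := by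
  rintro ⟨x, a⟩ hx ⟨x', a'⟩ hx' s t hs ht hst
  simp only [Set.mem_setOf_eq] at *
  have h1 := hconv x x' s t hs ht hst
  refine h1.trans ?_
  have h2 : (s : EReal) * φ x ≤ (s : EReal) * (a : EReal) :=
    mul_le_mul_of_nonneg_left hx (by exact_mod_cast hs)
  have h3 : (t : EReal) * φ x' ≤ (t : EReal) * (a' : EReal) :=
    mul_le_mul_of_nonneg_left hx' (by exact_mod_cast ht)
  calc (s : EReal) * φ x + (t : EReal) * φ x' ≤ (s : EReal) * a + (t : EReal) * a' :=
        add_le_add h2 h3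
    _ = ((s * a + t * a' : ℝ) : EReal) := by rw [EReal.coe_add, EReal.coe_mul, EReal.coe_mul]
    _ = _ := by norm_num [Prod.smul_def, smul_eq_mul]

lemma epi_closed (hlsc : LowerSemicontinuous φ) :
    IsClosed {p : X × ℝ | φ p.1 ≤ (p.2 : EReal)} := by
  rw [← isOpen_compl_iff, isOpen_iff_mem_nhds]
  rintro ⟨x, a⟩ h
  simp only [Set.mem_compl_iff, Set.mem_setOf_eq, not_le] at h
  obtain ⟨m, ham, hmφ⟩ := EReal.exists_between_coe_real h
  have h1 : {x' | (m : EReal) < φ x'} ∈ nhds x := hlsc x m hmφ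
  have h2 : Set.Iio m ∈ nhds a := Iio_mem_nhds (by exact_mod_cast ham)
  refine Filter.mem_of_superset (prod_mem_nhds h1 h2) ?_
  rintro ⟨x', a'⟩ ⟨hx', ha'⟩
  simp only [Set.mem_compl_iff, Set.mem_setOf_eq, not_le]
  exact lt_trans (by exact_mod_cast ha') hx'

/-- decomposition of a functional on X × ℝ -/
lemma decomp (f : X × ℝ →L[ℝ] ℝ) (x : X) (t : ℝ) :
    f (x, t) = f (x, 0) + t * f (0, 1) := by
  have h : (x, t) = (x, (0 : ℝ)) + t • ((0 : X), (1 : ℝ)) := by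
    simp [Prod.ext_iff]
  rw [h, map_add, map_smul, smul_eq_mul]

/-- The core separation step. -/
lemma sep_aux (hconv : ERealConvexOn φ) (hlsc : LowerSemicontinuous φ)
    (hreal : ∀ x, φ x ≠ ⊥) {z : X} {c : ℝ} (hz : ¬ φ z ≤ (c : EReal))
    (x₀ : X) (h₀ : φ x₀ ≠ ⊤) :
    (∃ q : X →L[ℝ] ℝ, ∃ α : ℝ, legendreConj φ q ≤ (α : EReal) ∧ c < q z - α) ∨
    (∃ g : X →L[ℝ] ℝ, ∃ u : ℝ, (∀ x : X, φ x ≠ ⊤ → g x < u) ∧ u < g z) := by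
  set E : Set (X × ℝ) := {p : X × ℝ | φ p.1 ≤ (p.2 : EReal)} with hE
  have hzE : ((z, c) : X × ℝ) ∉ E := hz
  obtain ⟨f, u, hfE, hfz⟩ :=
    geometric_hahn_banach_closed_point (epi_convex φ hconv) (epi_closed φ hlsc) hzE
  set g : X →L[ℝ] ℝ := f.comp (ContinuousLinearMap.inl ℝ X ℝ) with hg
  set s : ℝ := f (0, 1) with hs
  have hft : ∀ x t, f (x, t) = g x + t * s := by
    intro x t; rw [hg]; exact decomp f x t
  -- membership of epigraph points
  have hmem : ∀ x : X, φ x ≠ ⊤ → ∀ t : ℝ, (φ x).toReal ≤ t → g x + t * s < u := by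
    intro x hx t hxt
    have hx' : ((x, t) : X × ℝ) ∈ E := by
      show φ x ≤ (t : EReal)
      rw [← EReal.coe_toReal hx (hreal x)]
      exact_mod_cast hxt
    have := hfE _ hx'
    rwa [hft] at this
  -- s ≤ 0
  have hs0 : s ≤ 0 := by
    by_contra hpos
    push_neg at hpos
    obtain ⟨n, hn⟩ := exists_nat_gt ((u - g x₀) / s - (φ x₀).toReal)
    have h1 := hmem x₀ h₀ ((φ x₀).toReal + n) (le_add_of_nonneg_right n.cast_nonneg)
    have h2 : (u - g x₀) / s < (φ x₀).toReal + n := by linarith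
    rw [div_lt_iff₀ hpos] at h2
    linarith [h1]
  have hfz' : u < g z + c * s := by rw [← hft]; exact hfz
  rcases lt_or_eq_of_le hs0 with hneg | hzero
  · -- s < 0 : rescale
    left
    have hns : (0:ℝ) < -s := by linarith
    have hsne : s ≠ 0 := by linarith
    refine ⟨(-s)⁻¹ • g, (-s)⁻¹ * u, ?_, ?_⟩
    · apply iSup_le
      intro x
      by_cases hx : φ x = ⊤
      · rw [hx, EReal.sub_top]; exact bot_le
      · rw [← EReal.coe_toReal hx (hreal x), ← EReal.coe_sub, EReal.coe_le_coe_iff]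
        have h1 := hmem x hx (φ x).toReal le_rfl
        have h2 : (-s)⁻¹ * (g x + (φ x).toReal * s) < (-s)⁻¹ * u :=
          mul_lt_mul_of_pos_left h1 (by positivity)
        have h3 : (-s)⁻¹ * (g x + (φ x).toReal * s) =
            (-s)⁻¹ * g x - (φ x).toReal := by field_simp; ring
        simp only [ContinuousLinearMap.smul_apply, smul_eq_mul]
        linarith
    · have h2 : (-s)⁻¹ * u < (-s)⁻¹ * (g z + c * s) :=
        mul_lt_mul_of_pos_left hfz' (by positivity)
      have h3 : (-s)⁻¹ * (g z + c * s) = (-s)⁻¹ * g z - c := by field_simp; ring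
      simp only [ContinuousLinearMap.smul_apply, smul_eq_mul]
      linarith
  · -- s = 0
    right
    refine ⟨g, u, ?_, ?_⟩
    · intro x hx
      have h1 := hmem x hx (φ x).toReal le_rfl
      rw [hzero, mul_zero, add_zero] at h1
      exact h1
    · rw [hzero, mul_zero, add_zero] at hfz'
      exact hfz'

variable {X : Type*} [NormedAddCommGroup X] [NormedSpace ℝ X] (φ : X → EReal)

lemma exists_conj_bdd (hconv : ERealConvexOn φ) (hlsc : LowerSemicontinuous φ)
    (hproper : ∃ x, φ x ≠ ⊤) (hreal : ∀ x, φ x ≠ ⊥) :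
    ∃ (q : X →L[ℝ] ℝ) (α : ℝ), legendreConj φ q ≤ (α : EReal) := by
  obtain ⟨x₀, h₀⟩ := hproper
  have hz : ¬ φ x₀ ≤ (((φ x₀).toReal - 1 : ℝ) : EReal) := by
    rw [← EReal.coe_toReal h₀ (hreal x₀), EReal.coe_le_coe_iff]
    push_neg
    rw [EReal.toReal_coe]
    linarith
  rcases sep_aux φ hconv hlsc hreal hz x₀ h₀ with ⟨q, α, hα, _⟩ | ⟨g, u, hg, hu⟩
  · exact ⟨q, α, hα⟩
  · exact absurd hu (not_lt.2 (hg x₀ h₀).le)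

lemma biconj_ge (hconv : ERealConvexOn φ) (hlsc : LowerSemicontinuous φ)
    (hproper : ∃ x, φ x ≠ ⊤) (hreal : ∀ x, φ x ≠ ⊥) (y : X) :
    φ y ≤ biconj φ y := by
  apply le_of_forall_real_lt
  intro c hc
  have hz : ¬ φ y ≤ (c : EReal) := not_le.2 hc
  obtain ⟨x₀, h₀⟩ := hproper
  rcases sep_aux φ hconv hlsc hreal hz x₀ h₀ with ⟨q, α, hα, hc'⟩ | ⟨g, u, hg, hu⟩
  · calc (c : EReal) ≤ ((q y - α : ℝ) : EReal) := by exact_mod_cast hc'.le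
      _ ≤ ((q y : ℝ) : EReal) - legendreConj φ q := by
          rw [EReal.coe_sub]; exact EReal.sub_le_sub le_rfl hα
      _ ≤ biconj φ y := le_iSup (fun q => ((q y : ℝ) : EReal) - legendreConj φ q) q
  · obtain ⟨q₀, α₀, hα₀⟩ := exists_conj_bdd φ hconv hlsc ⟨x₀, h₀⟩ hreal
    have hdpos : (0:ℝ) < g y - u := by linarith
    set lam : ℝ := max 0 ((c - (q₀ y - α₀)) / (g y - u)) with hlamdef
    have hl0 : 0 ≤ lam := le_max_left _ _
    have hlam : c - (q₀ y - α₀) ≤ lam * (g y - u) := by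
      rw [← div_le_iff₀ hdpos]
      exact le_max_right _ _
    have claim : legendreConj φ (q₀ + lam • g) ≤ ((α₀ + lam * u : ℝ) : EReal) := by
      apply iSup_le
      intro x
      by_cases hx : φ x = ⊤
      · rw [hx, EReal.sub_top]; exact bot_le
      · have h1 : ((q₀ x - (φ x).toReal : ℝ) : EReal) ≤ (α₀ : EReal) := by
          refine le_trans ?_ hα₀
          have := le_lc φ q₀ x
          rwa [← EReal.coe_toReal hx (hreal x), ← EReal.coe_sub] at this
        rw [EReal.coe_le_coe_iff] at h1
        have h2 : lam * g x ≤ lam * u := mul_le_mul_of_nonneg_left (hg x hx).le hl0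
        rw [← EReal.coe_toReal hx (hreal x), ← EReal.coe_sub, EReal.coe_le_coe_iff]
        simp only [ContinuousLinearMap.add_apply, ContinuousLinearMap.smul_apply, smul_eq_mul]
        linarith
    calc (c : EReal) ≤ (((q₀ + lam • g) y - (α₀ + lam * u) : ℝ) : EReal) := by
          rw [EReal.coe_le_coe_iff]
          simp only [ContinuousLinearMap.add_apply, ContinuousLinearMap.smul_apply, smul_eq_mul]
          nlinarith [hlam]
      _ ≤ (((q₀ + lam • g) y : ℝ) : EReal) - legendreConj φ (q₀ + lam • g) := by
          rw [EReal.coe_sub]; exact EReal.sub_le_sub le_rfl claim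
      _ ≤ biconj φ y := le_iSup (fun q => ((q y : ℝ) : EReal) - legendreConj φ q) (q₀ + lam • g)

theorem fenchelMoreau (hconv : ERealConvexOn φ) (hlsc : LowerSemicontinuous φ)
    (hproper : ∃ x, φ x ≠ ⊤) (hreal : ∀ x, φ x ≠ ⊥) (y : X) :
    biconj φ y = φ y :=
  le_antisymm (biconj_le φ hreal y) (biconj_ge φ hconv hlsc hproper hreal y)

end FMaux

/-- if `φ` is proper convex lsc with symmetric domain and `A` is a linear
antisymmetric operator whose domain contains `D(φ)`, then
`M(x,p) = φ(x) + φ*(Ax − p)` (for `x ∈ D(φ)`, `+∞` otherwise) is anti-selfdual. -/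
theorem stmt2 {X : Type*} [NormedAddCommGroup X] [NormedSpace ℝ X] [CompleteSpace X]
    (hrefl : IsReflexiveSpace X)
    (φ : X → EReal)
    (hconv : ERealConvexOn φ)
    (hlsc : LowerSemicontinuous φ)
    (hproper : ∃ x, φ x ≠ ⊤) (hreal : ∀ x, φ x ≠ ⊥)
    (hsymdom : ∀ x : X, φ x ≠ ⊤ → φ (-x) ≠ ⊤)
    (DA : Subspace ℝ X)
    (A : DA →ₗ[ℝ] (X →L[ℝ] ℝ))
    (hanti : ∀ x y : DA, A x (y : X) = -(A y (x : X)))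
    (hdom : ∀ x : X, φ x ≠ ⊤ → x ∈ DA)
    (M : X × (X →L[ℝ] ℝ) → EReal)
    (hM₁ : ∀ (x : X) (p : X →L[ℝ] ℝ) (hx : x ∈ DA), φ x ≠ ⊤ →
      M (x, p) = φ x + legendreConj φ (A ⟨x, hx⟩ - p))
    (hM₂ : ∀ (x : X) (p : X →L[ℝ] ℝ), φ x = ⊤ → M (x, p) = ⊤) :
    IsASD M := by
  intro q y
  have FM : ∀ z : X, FMaux.biconj φ z = φ z := FMaux.fenchelMoreau φ hconv hlsc hproper hreal
  -- generic lower-bound term for the dual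
  have term_le : ∀ (x : X) (hxT : φ x ≠ ⊤) (r : X →L[ℝ] ℝ), legendreConj φ r ≠ ⊤ →
      ((q x + (A ⟨x, hdom x hxT⟩) y - r y - ((φ x).toReal + (legendreConj φ r).toReal) : ℝ) :
        EReal) ≤ lagrangianDual M q y := by
    intro x hxT r hrT
    set p : X →L[ℝ] ℝ := A ⟨x, hdom x hxT⟩ - r with hp
    have hsub : A ⟨x, hdom x hxT⟩ - p = r := by rw [hp]; abel
    have hM : M (x, p) = (((φ x).toReal + (legendreConj φ r).toReal : ℝ) : EReal) := by
      rw [hM₁ x p (hdom x hxT) hxT, hsub, EReal.coe_add, EReal.coe_toReal hxT (hreal x),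
        EReal.coe_toReal hrT (FMaux.lc_ne_bot φ hproper hreal r)]
    have heq : ((q x + p y : ℝ) : EReal) - M (x, p) =
        ((q x + (A ⟨x, hdom x hxT⟩) y - r y -
          ((φ x).toReal + (legendreConj φ r).toReal) : ℝ) : EReal) := by
      rw [hM, ← EReal.coe_sub]
      norm_cast
      rw [hp]
      simp only [ContinuousLinearMap.sub_apply]
      ring
    rw [← heq]
    simp only [lagrangianDual]
    exact le_iSup_of_le x (le_iSup_of_le p le_rfl)
  -- picking near-optimal r for the biconjugate at -y
  have pick_r : ∀ b : ℝ, (b : EReal) < φ (-y) → ∃ r : X →L[ℝ] ℝ,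
      legendreConj φ r ≠ ⊤ ∧ b < r (-y) - (legendreConj φ r).toReal := by
    intro b hb
    rw [← FM (-y)] at hb
    simp only [FMaux.biconj, lt_iSup_iff] at hb
    obtain ⟨r, hr⟩ := hb
    have hrT : legendreConj φ r ≠ ⊤ := by
      intro h
      rw [h, EReal.sub_top] at hr
      exact absurd hr (not_lt.2 bot_le)
    have hrB := FMaux.lc_ne_bot φ hproper hreal r
    rw [← EReal.coe_toReal hrT hrB, ← EReal.coe_sub, EReal.coe_lt_coe_iff] at hr
    exact ⟨r, hrT, hr⟩
  by_cases hy : φ (-y) = ⊤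
  · -- case A : -y outside the domain, both sides are ⊤
    rw [hM₂ (-y) (-q) hy]
    apply FMaux.eq_top_of_forall_real_le
    intro c
    obtain ⟨x₀, h₀⟩ := hproper
    set t₀ : ℝ := (φ x₀).toReal with ht₀
    set a₀ : ℝ := q x₀ + (A ⟨x₀, hdom x₀ h₀⟩) y - t₀ with ha₀
    obtain ⟨r, hrT, hr⟩ := pick_r (c - a₀) (by rw [hy]; exact EReal.coe_lt_top _)
    refine le_trans ?_ (term_le x₀ h₀ r hrT)
    rw [EReal.coe_le_coe_iff]
    rw [map_neg] at hr
    linarith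
  · -- case B : -y (hence y) in the domain
    have hyT : φ y ≠ ⊤ := by have := hsymdom (-y) hy; rwa [neg_neg] at this
    have hyA : y ∈ DA := hdom y hyT
    have hnyA : (-y) ∈ DA := hdom (-y) hy
    set B : X →L[ℝ] ℝ := A ⟨y, hyA⟩ with hB
    have hAneg : A ⟨-y, hnyA⟩ = -B := by
      have h : (⟨-y, hnyA⟩ : DA) = -(⟨y, hyA⟩ : DA) := by ext; simp
      rw [h, map_neg, hB]
    have hRHS : M (-y, -q) = φ (-y) + legendreConj φ (q - B) := by
      rw [hM₁ (-y) (-q) hnyA hy]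
      congr 2
      rw [hAneg]
      abel
    set ty : ℝ := (φ (-y)).toReal with hty
    have hyB : φ (-y) = (ty : EReal) := (EReal.coe_toReal hy (hreal (-y))).symm
    rw [hRHS]
    apply le_antisymm
    · -- upper bound
      simp only [lagrangianDual]
      apply iSup_le; intro x; apply iSup_le; intro p
      by_cases hx : φ x = ⊤
      · rw [hM₂ x p hx, EReal.sub_top]; exact bot_le
      · rw [hM₁ x p (hdom x hx) hx]
        set r : X →L[ℝ] ℝ := A ⟨x, hdom x hx⟩ - p with hrdef
        by_cases hrT : legendreConj φ r = ⊤
        · have h2 : φ x + legendreConj φ r = ⊤ := by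
            rw [hrT]; exact EReal.add_top_of_ne_bot (hreal x)
          rw [h2, EReal.sub_top]; exact bot_le
        · have hrB := FMaux.lc_ne_bot φ hproper hreal r
          set l : ℝ := (legendreConj φ r).toReal with hl
          set tx : ℝ := (φ x).toReal with htx
          have hxc : φ x = (tx : EReal) := (EReal.coe_toReal hx (hreal x)).symm
          have hrc : legendreConj φ r = (l : EReal) := (EReal.coe_toReal hrT hrB).symm
          have ha1 : (((q - B) x - tx : ℝ) : EReal) ≤ legendreConj φ (q - B) := by
            have h3 := FMaux.le_lc φ (q - B) x
            rwa [hxc, ← EReal.coe_sub] at h3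
          have ha2 : ((r (-y) - l : ℝ) : EReal) ≤ φ (-y) := by
            have h3 : ((r (-y) : ℝ) : EReal) - legendreConj φ r ≤ FMaux.biconj φ (-y) :=
              le_iSup (fun r' : X →L[ℝ] ℝ =>
                ((r' (-y) : ℝ) : EReal) - legendreConj φ r') r
            rw [FM (-y)] at h3
            rwa [hrc, ← EReal.coe_sub] at h3
          have hanti' : (A ⟨x, hdom x hx⟩) y = -(B x) := by
            have := hanti ⟨x, hdom x hx⟩ ⟨y, hyA⟩
            simpa using this
          have hpy : p y = (A ⟨x, hdom x hx⟩) y - r y := by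
            rw [hrdef]; simp only [ContinuousLinearMap.sub_apply]; ring
          calc ((q x + p y : ℝ) : EReal) - (φ x + legendreConj φ r)
              = (((q - B) x - tx : ℝ) : EReal) + ((r (-y) - l : ℝ) : EReal) := by
                rw [hxc, hrc, ← EReal.coe_add, ← EReal.coe_sub, ← EReal.coe_add]
                norm_cast
                rw [hpy, hanti', map_neg]
                simp only [ContinuousLinearMap.sub_apply]
                ring
            _ ≤ legendreConj φ (q - B) + φ (-y) := add_le_add ha1 ha2
            _ = φ (-y) + legendreConj φ (q - B) := add_comm _ _
    · -- lower bound
      apply FMaux.le_of_forall_real_lt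
      intro c hc
      obtain ⟨a, haL, hca⟩ : ∃ a : ℝ, (a : EReal) < legendreConj φ (q - B) ∧ c < a + ty := by
        by_cases hL2 : legendreConj φ (q - B) = ⊤
        · exact ⟨c - ty + 1, by rw [hL2]; exact EReal.coe_lt_top _, by linarith⟩
        · have hL2B := FMaux.lc_ne_bot φ hproper hreal (q - B)
          set l2 : ℝ := (legendreConj φ (q - B)).toReal with hl2
          have hc2 : legendreConj φ (q - B) = (l2 : EReal) := (EReal.coe_toReal hL2 hL2B).symm
          rw [hyB, hc2, ← EReal.coe_add, EReal.coe_lt_coe_iff] at hc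
          refine ⟨(c - ty + l2) / 2, ?_, by linarith⟩
          rw [hc2, EReal.coe_lt_coe_iff]
          linarith
      simp only [legendreConj, lt_iSup_iff] at haL
      obtain ⟨x, hxa⟩ := haL
      have hx : φ x ≠ ⊤ := by
        intro h
        rw [h, EReal.sub_top] at hxa
        exact absurd hxa (not_lt.2 bot_le)
      set tx : ℝ := (φ x).toReal with htx
      have hxc : φ x = (tx : EReal) := (EReal.coe_toReal hx (hreal x)).symm
      rw [hxc, ← EReal.coe_sub, EReal.coe_lt_coe_iff] at hxa
      have hb : ((c - ((q - B) x - tx) : ℝ) : EReal) < φ (-y) := by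
        rw [hyB, EReal.coe_lt_coe_iff]
        linarith
      obtain ⟨r, hrT, hr⟩ := pick_r (c - ((q - B) x - tx)) hb
      refine le_trans ?_ (term_le x hx r hrT)
      rw [EReal.coe_le_coe_iff]
      have hanti' : (A ⟨x, hdom x hx⟩) y = -(B x) := by
        have := hanti ⟨x, hdom x hx⟩ ⟨y, hyA⟩
        simpa using this
      rw [map_neg] at hr
      simp only [ContinuousLinearMap.sub_apply] at hxa hr ⊢
      rw [hanti']
      linarith
end
end

section
/- Let H be a real Hilbert space and L : H × H → ℝ ∪ {+∞} an anti-selfdual Lagrangian that is uniformly convex in both variables, i.e., there is ε > 0 such that (x,p) ↦ L(x,p) − (ε/2)(‖x‖² + ‖p‖²) is convex. Then for all u, x ∈ H there exists a unique v ∈ H, denoted R(u,x), such that x ∈ ∂₂L(u,v); moreover the map (u,x) ↦ R(u,x) is jointly Lipschitz on H × H, i.e., there is K > 0 such that ‖R(u₁,x₁) − R(u₂,x₂)‖ ≤ K(‖u₁ − u₂‖ + ‖x₁ − x₂‖) for all u₁,u₂,x₁,x₂ ∈ H. -/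
open scoped RealInnerProductSpace NNReal

noncomputable section

/-- The Legendre–Fenchel dual, in both variables, of a Lagrangian on `H × H`. -/
def lagrangianDualH {H : Type*} [NormedAddCommGroup H] [InnerProductSpace ℝ H]
    (L : H × H → EReal) (q y : H) : EReal :=
  ⨆ x : H, ⨆ p : H, ((⟪q, x⟫ + ⟪y, p⟫ : ℝ) : EReal) - L (x, p)

/-- A Lagrangian on a Hilbert space is anti-selfdual if `L*(p,x) = L(−x,−p)`. -/
def IsASDH {H : Type*} [NormedAddCommGroup H] [InnerProductSpace ℝ H]
    (L : H × H → EReal) : Prop :=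
  ∀ p x : H, lagrangianDualH L p x = L (-x, -p)

/-- `(q,y) ∈ ∂L(x,p)`, the subdifferential of the Lagrangian `L` at `(x,p)`. -/
def MemSubdiff {H : Type*} [NormedAddCommGroup H] [InnerProductSpace ℝ H]
    (L : H × H → EReal) (x p q y : H) : Prop :=
  ∀ z r : H, L (x, p) + ((⟪q, z - x⟫ + ⟪y, r - p⟫ : ℝ) : EReal) ≤ L (z, r)

/-- `y ∈ ∂₂L(u,v)`, the subdifferential in the second variable. -/
def MemSubdiff2 {H : Type*} [NormedAddCommGroup H] [InnerProductSpace ℝ H]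
    (L : H × H → EReal) (u v y : H) : Prop :=
  ∀ r : H, L (u, v) + ((⟪y, r - v⟫ : ℝ) : EReal) ≤ L (u, r)

/-- `q ∈ ∂₁L(x,p)`, the subdifferential in the first variable. -/
def MemSubdiff1 {H : Type*} [NormedAddCommGroup H] [InnerProductSpace ℝ H]
    (L : H × H → EReal) (x p q : H) : Prop :=
  ∀ z : H, L (x, p) + ((⟪q, z - x⟫ : ℝ) : EReal) ≤ L (z, p)

/-- The `λ`-regularization of a Lagrangian:
`L_λ(x,p) = inf_z { L(z,p) + ‖x−z‖²/(2λ) } + (λ/2)‖p‖²`. -/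
def lagReg {H : Type*} [NormedAddCommGroup H] [InnerProductSpace ℝ H]
    (lam : ℝ) (L : H × H → EReal) (x p : H) : EReal :=
  (⨅ z : H, L (z, p) + ((‖x - z‖ ^ 2 / (2 * lam) : ℝ) : EReal))
    + ((lam / 2 * ‖p‖ ^ 2 : ℝ) : EReal)

/-!
Anti-selfduality gives the Fenchel–Young bound `L (x, p) ≥ -⟪x, p⟫`. With uniform convexity this
makes `L` coercive, so its conjugate is finite; as the conjugate is `L` composed with
`(q, y) ↦ (-y, -q)`, `L` is real-valued. The conjugate of an `ε`-uniformly convex function is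
`1/ε`-smooth (`‖·‖²/(2ε)` minus it is convex), so `L` is both `ε`-uniformly convex and
`1/ε`-smooth. `R u x` is the minimiser of the `ε`-strongly convex function
`p ↦ L (u, p) - ⟪x, p⟫`; smoothness bounds the mixed second differences of `L`, which controls
how the minimiser moves with `(u, x)`.
-/

open Set Filter Topology

section Convexity
variable {E F : Type*} [AddCommGroup E] [Module ℝ E] [AddCommGroup F] [Module ℝ F]

lemma ERealConvexOn.convexOn_univ {g : E → ℝ} (h : ERealConvexOn fun x => (g x : EReal)) :
    ConvexOn ℝ univ g :=
  ⟨convex_univ, fun x _ y _ s t hs ht hst => by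
    have hxy := h x y s t hs ht hst
    simp only [smul_eq_mul] at hxy ⊢
    exact_mod_cast hxy⟩

lemma ConvexOn.of_isGLB_range {Φ : E × F → ℝ} (hΦ : ConvexOn ℝ univ Φ) {G : E → ℝ}
    (hG : ∀ u, IsGLB (range fun z => Φ (u, z)) (G u)) : ConvexOn ℝ univ G := by
  refine ⟨convex_univ, fun a _ b _ s t hs ht hst => le_of_forall_pos_le_add fun δ hδ => ?_⟩
  obtain ⟨_, ⟨za, rfl⟩, -, hza⟩ := (hG a).exists_between (lt_add_of_pos_right (G a) hδ)
  obtain ⟨_, ⟨zb, rfl⟩, -, hzb⟩ := (hG b).exists_between (lt_add_of_pos_right (G b) hδ)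
  calc G (s • a + t • b) ≤ Φ (s • (a, za) + t • (b, zb)) := (hG _).1 ⟨s • za + t • zb, rfl⟩
    _ ≤ s * Φ (a, za) + t * Φ (b, zb) := hΦ.2 trivial trivial hs ht hst
    _ ≤ s * (G a + δ) + t * (G b + δ) := by gcongr
    _ = s • G a + t • G b + δ := by rw [smul_eq_mul, smul_eq_mul]; linear_combination δ * hst

end Convexity

section StrongConvexity
variable {E : Type*} [NormedAddCommGroup E] [NormedSpace ℝ E] {f : E → ℝ} {m : ℝ}

lemma StrongConvexOn.midpoint_le (hf : StrongConvexOn univ m f) (p q : E) :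
    f ((1 / 2 : ℝ) • p + (1 / 2 : ℝ) • q) ≤ (f p + f q) / 2 - m / 8 * ‖p - q‖ ^ 2 := by
  have := hf.2 (mem_univ p) (mem_univ q) (by norm_num : (0 : ℝ) ≤ 1 / 2)
    (by norm_num : (0 : ℝ) ≤ 1 / 2) (by norm_num)
  simp only [smul_eq_mul] at this
  linarith

lemma StrongConvexOn.add_sq_le_of_forall_le (hf : StrongConvexOn univ m f) {v : E}
    (hv : ∀ p, f v ≤ f p) (p : E) : f v + m / 4 * ‖p - v‖ ^ 2 ≤ f p := by
  linarith [hf.midpoint_le p v, hv ((1 / 2 : ℝ) • p + (1 / 2 : ℝ) • v)]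

lemma StrongConvexOn.exists_forall_le [CompleteSpace E] (hf : StrongConvexOn univ m f)
    (hm : 0 < m) (hlsc : LowerSemicontinuous f) (hbdd : BddBelow (range f)) :
    ∃ v, ∀ p, f v ≤ f p := by
  set μ := sInf (range f)
  have hμ : ∀ p, μ ≤ f p := fun p => csInf_le hbdd ⟨p, rfl⟩
  set δ : ℕ → ℝ := fun n => m / 8 * (1 / ((n : ℝ) + 1)) ^ 2
  have hδ : Tendsto δ atTop (𝓝 0) := by
    simpa [δ] using (tendsto_one_div_add_atTop_nhds_zero_nat.pow 2).const_mul (m / 8)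
  have hex : ∀ n, ∃ p, f p < μ + δ n := fun n => by
    obtain ⟨_, ⟨p, rfl⟩, hp⟩ := exists_lt_of_csInf_lt (range_nonempty f)
      (lt_add_of_pos_right μ (by positivity : 0 < δ n))
    exact ⟨p, hp⟩
  choose u hu using hex
  have hcauchy : CauchySeq u := by
    refine cauchySeq_of_le_tendsto_0 (fun N : ℕ => 1 / ((N : ℝ) + 1)) (fun n k N hn hk => ?_)
      tendsto_one_div_add_atTop_nhds_zero_nat
    have hmono : ∀ j, N ≤ j → δ j ≤ δ N := fun j hj => by
      simp only [δ]; gcongr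
    have hsq : m / 8 * dist (u n) (u k) ^ 2 ≤ δ N := by
      rw [dist_eq_norm]
      linarith [hf.midpoint_le (u n) (u k), hμ ((1 / 2 : ℝ) • u n + (1 / 2 : ℝ) • u k),
        hu n, hu k, hmono n hn, hmono k hk]
    exact (pow_le_pow_iff_left₀ dist_nonneg (by positivity) two_ne_zero).1
      (le_of_mul_le_mul_left hsq (by positivity))
  obtain ⟨v, hv⟩ := cauchySeq_tendsto_of_complete hcauchy
  refine ⟨v, fun p => le_trans ?_ (hμ p)⟩
  by_contra! hlt
  have hclose : ∀ᶠ n in atTop, δ n < (f v - μ) / 2 :=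
    hδ.eventually_lt_const (by linarith)
  have hfar : ∀ᶠ n in atTop, (μ + f v) / 2 < f (u n) :=
    hv.eventually (hlsc v ((μ + f v) / 2) (by linarith))
  obtain ⟨n, hn, hn'⟩ := (hclose.and hfar).exists
  linarith [hu n]

end StrongConvexity

lemma sub_le_of_forall_sub_le {E : Type*} [SeminormedAddCommGroup E] [NormedSpace ℝ E]
    {φ : E → ℝ} {A B : ℝ} (h : ∀ w w', φ w' - φ w ≤ A + B * ‖w' - w‖ ^ 2) (v₁ v₂ : E) {n : ℕ}
    (hn : n ≠ 0) : φ v₂ - φ v₁ ≤ n * A + B * ‖v₂ - v₁‖ ^ 2 / n := by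
  set w : ℕ → E := fun j => v₁ + ((j : ℝ) / n) • (v₂ - v₁)
  have hn' : (n : ℝ) ≠ 0 := Nat.cast_ne_zero.2 hn
  have hstep : ∀ j, φ (w (j + 1)) - φ (w j) ≤ A + B * ‖v₂ - v₁‖ ^ 2 / n ^ 2 := fun j => by
    have hw : w (j + 1) - w j = (1 / (n : ℝ)) • (v₂ - v₁) := by
      simp only [w]; rw [add_sub_add_left_eq_sub, ← sub_smul]; push_cast; ring_nf
    calc φ (w (j + 1)) - φ (w j) ≤ A + B * ‖w (j + 1) - w j‖ ^ 2 := h _ _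
      _ = A + B * ‖v₂ - v₁‖ ^ 2 / n ^ 2 := by
        rw [hw, norm_smul, mul_pow, Real.norm_eq_abs, sq_abs]; ring
  calc φ v₂ - φ v₁ = φ (w n) - φ (w 0) := by simp [w, hn']
    _ = ∑ j ∈ Finset.range n, (φ (w (j + 1)) - φ (w j)) :=
        (Finset.sum_range_sub (fun j => φ (w j)) n).symm
    _ ≤ ∑ _j ∈ Finset.range n, (A + B * ‖v₂ - v₁‖ ^ 2 / n ^ 2) :=
        Finset.sum_le_sum fun j _ => hstep j
    _ = n * A + B * ‖v₂ - v₁‖ ^ 2 / n := by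
      rw [Finset.sum_const, Finset.card_range, nsmul_eq_mul]; field_simp

lemma le_of_sq_le_mul_sq_add_mul {a b d β : ℝ} (hβ : 0 ≤ β) (ha : 0 ≤ a) (hb : 0 ≤ b)
    (h : d ^ 2 ≤ β * a ^ 2 + b * d) : d ≤ (1 + β) * a + b := by
  by_contra! hd
  have hd0 : 0 < d := by nlinarith
  have h1 := mul_lt_mul_of_pos_left hd hd0
  have h2 := mul_le_mul_of_nonneg_left hd.le (by positivity : 0 ≤ (1 + β) * a)
  nlinarith [mul_nonneg (mul_nonneg (by positivity : (0 : ℝ) ≤ 1 + β) ha) hb, sq_nonneg a,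
    mul_nonneg (by positivity : 0 ≤ 1 + β + β ^ 2) (sq_nonneg a)]

lemma real_inner_le_sq_div_add {E : Type*} [NormedAddCommGroup E] [InnerProductSpace ℝ E]
    {ε : ℝ} (hε : 0 < ε) (x y : E) : ⟪x, y⟫ ≤ ‖x‖ ^ 2 / ε + ε / 4 * ‖y‖ ^ 2 := by
  have h := real_inner_le_norm x y
  have : ε * (‖x‖ * ‖y‖) ≤ ‖x‖ ^ 2 + ε ^ 2 / 4 * ‖y‖ ^ 2 := by
    nlinarith [sq_nonneg (‖x‖ - ε / 2 * ‖y‖)]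
  rw [div_add' _ _ _ hε.ne', le_div_iff₀ hε]
  nlinarith

lemma norm_half_smul_add_half_smul_sq {E : Type*} [NormedAddCommGroup E] [InnerProductSpace ℝ E]
    (x y : E) :
    ‖(1 / 2 : ℝ) • x + (1 / 2 : ℝ) • y‖ ^ 2 = ‖x‖ ^ 2 / 2 + ‖y‖ ^ 2 / 2 - ‖x - y‖ ^ 2 / 4 := by
  rw [← smul_add, norm_smul, Real.norm_eq_abs, mul_pow, sq_abs, norm_add_sq_real, norm_sub_sq_real]
  ring

lemma LowerSemicontinuous.of_coe_ereal {α : Type*} [TopologicalSpace α] {f : α → ℝ}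
    (h : LowerSemicontinuous fun x => (f x : EReal)) : LowerSemicontinuous f :=
  fun x y hy => (h x y (EReal.coe_lt_coe_iff.2 hy)).mono fun _ hx => EReal.coe_lt_coe_iff.1 hx

section Lagrangian
variable {H : Type*} [NormedAddCommGroup H] [InnerProductSpace ℝ H] {L : H × H → EReal}

lemma le_lagrangianDualH (L : H × H → EReal) (q y x p : H) :
    ((⟪q, x⟫ + ⟪y, p⟫ : ℝ) : EReal) - L (x, p) ≤ lagrangianDualH L q y :=
  le_iSup₂_of_le (f := fun x p => ((⟪q, x⟫ + ⟪y, p⟫ : ℝ) : EReal) - L (x, p)) x p le_rfl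

lemma IsASDH.apply_eq_dual (hASD : IsASDH L) (z : H × H) :
    L z = lagrangianDualH L (-z.2) (-z.1) := by
  rw [hASD, neg_neg, neg_neg]

/-- Fenchel–Young: `L (x, p) + L* (-p, -x) ≥ -2⟪x, p⟫`, and `L* (-p, -x) = L (x, p)`. -/
lemma IsASDH.neg_inner_le (hASD : IsASDH L) (hreal : ∀ z, L z ≠ ⊥) (z : H × H) :
    ((-⟪z.1, z.2⟫ : ℝ) : EReal) ≤ L z := by
  rcases eq_or_ne (L z) ⊤ with htop | htop
  · simp [htop]
  obtain ⟨a, ha⟩ : ∃ a : ℝ, L z = a := ⟨_, (EReal.coe_toReal htop (hreal z)).symm⟩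
  have h := le_lagrangianDualH L (-z.2) (-z.1) z.1 z.2
  rw [← hASD.apply_eq_dual, ha] at h
  rw [ha]
  norm_cast at h ⊢
  simp only [inner_neg_left, real_inner_comm z.1 z.2] at h
  linarith

variable {ε : ℝ}

lemma exists_coe_le_of_uniformlyConvex (hreal : ∀ z, L z ≠ ⊥)
    (hunif : ERealConvexOn fun zp : H × H =>
      L zp - ((ε / 2 * (‖zp.1‖ ^ 2 + ‖zp.2‖ ^ 2) : ℝ) : EReal))
    {x y : H × H} {a b : ℝ} (hx : L x = a) (hy : L y = b) {s t : ℝ} (hs : 0 ≤ s) (ht : 0 ≤ t)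
    (hst : s + t = 1) :
    ∃ c : ℝ, L (s • x + t • y) = c ∧
      c - ε / 2 * (‖(s • x + t • y).1‖ ^ 2 + ‖(s • x + t • y).2‖ ^ 2)
        ≤ s * (a - ε / 2 * (‖x.1‖ ^ 2 + ‖x.2‖ ^ 2))
          + t * (b - ε / 2 * (‖y.1‖ ^ 2 + ‖y.2‖ ^ 2)) := by
  have h := hunif x y s t hs ht hst
  simp only [hx, hy, ← EReal.coe_sub, ← EReal.coe_mul, ← EReal.coe_add] at h
  rcases eq_or_ne (L (s • x + t • y)) ⊤ with htop | htop
  · rw [htop, EReal.top_sub_coe] at h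
    exact absurd h (not_le.2 (EReal.coe_lt_top _))
  obtain ⟨c, hc⟩ : ∃ c : ℝ, L (s • x + t • y) = c :=
    ⟨_, (EReal.coe_toReal htop (hreal _)).symm⟩
  rw [hc, ← EReal.coe_sub] at h
  exact ⟨c, hc, by exact_mod_cast h⟩

/-- Uniform convexity lets the quadratic Fenchel–Young bound `L z ≥ -‖z‖²/2`, used at the point
`(1 - t) z₀ + t z` with `t` small, improve to a coercive bound at `z`. -/
lemma IsASDH.exists_quadratic_lower_bound (hASD : IsASDH L) (hreal : ∀ z, L z ≠ ⊥) (hε : 0 < ε)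
    (hunif : ERealConvexOn fun zp : H × H =>
      L zp - ((ε / 2 * (‖zp.1‖ ^ 2 + ‖zp.2‖ ^ 2) : ℝ) : EReal))
    {z₀ : H × H} (h₀ : L z₀ ≠ ⊤) :
    ∃ C : ℝ, ∀ z : H × H, ((ε / 4 * (‖z.1‖ ^ 2 + ‖z.2‖ ^ 2) - C : ℝ) : EReal) ≤ L z := by
  obtain ⟨a₀, ha₀⟩ : ∃ a : ℝ, L z₀ = a := ⟨_, (EReal.coe_toReal h₀ (hreal z₀)).symm⟩
  set t := ε / (4 * (1 + ε))
  have ht0 : 0 < t := by positivity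
  have ht1 : t ≤ 1 := by rw [div_le_one (by positivity)]; linarith
  have hte : (1 + ε) * t = ε / 4 := by simp only [t]; field_simp
  have hsq : ∀ x y : H, ‖(1 - t) • x + t • y‖ ^ 2 ≤ 2 * ‖x‖ ^ 2 + 2 * t ^ 2 * ‖y‖ ^ 2 := by
    intro x y
    have h := (pow_le_pow_left₀ (norm_nonneg _) (norm_add_le ((1 - t) • x) (t • y)) 2).trans
      add_sq_le
    rw [norm_smul, norm_smul, Real.norm_eq_abs, Real.norm_eq_abs, mul_pow, mul_pow, sq_abs,
      sq_abs] at h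
    nlinarith [sq_nonneg ‖x‖, mul_nonneg (mul_nonneg ht0.le (by linarith : 0 ≤ 2 - t))
      (sq_nonneg ‖x‖)]
  set Q₀ := ‖z₀.1‖ ^ 2 + ‖z₀.2‖ ^ 2
  refine ⟨((1 + ε) * Q₀ + |a₀|) / t, fun z => ?_⟩
  rcases eq_or_ne (L z) ⊤ with htop | htop
  · simp [htop]
  obtain ⟨a, ha⟩ : ∃ a : ℝ, L z = a := ⟨_, (EReal.coe_toReal htop (hreal z)).symm⟩
  obtain ⟨c, hc, hconv⟩ := exists_coe_le_of_uniformlyConvex hreal hunif ha₀ ha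
    (by linarith : 0 ≤ 1 - t) ht0.le (by ring)
  set m := (1 - t) • z₀ + t • z
  have hFY : -(‖m.1‖ ^ 2 + ‖m.2‖ ^ 2) / 2 ≤ c := by
    have h := hASD.neg_inner_le hreal m
    rw [hc] at h
    linarith [EReal.coe_le_coe_iff.1 h, real_inner_le_sq_div_add two_pos m.1 m.2]
  have hm : ‖m.1‖ ^ 2 + ‖m.2‖ ^ 2 ≤ 2 * Q₀ + 2 * t ^ 2 * (‖z.1‖ ^ 2 + ‖z.2‖ ^ 2) := by
    simp only [m, Prod.fst_add, Prod.snd_add, Prod.smul_fst, Prod.smul_snd]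
    linarith [hsq z₀.1 z.1, hsq z₀.2 z.2]
  have key : t * (ε / 4 * (‖z.1‖ ^ 2 + ‖z.2‖ ^ 2)) ≤ t * a + ((1 + ε) * Q₀ + |a₀|) := by
    have h1 := mul_le_mul_of_nonneg_left hm (by positivity : 0 ≤ (1 + ε) / 2)
    have h2 : (1 - t) * a₀ ≤ |a₀| := by
      nlinarith [le_abs_self a₀, abs_nonneg a₀]
    have h3 : 0 ≤ (1 - t) * (ε / 2 * Q₀) := by
      have : 0 ≤ Q₀ := by positivity
      have : 0 ≤ 1 - t := by linarith
      positivity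
    have h4 : (1 + ε) * t ^ 2 * (‖z.1‖ ^ 2 + ‖z.2‖ ^ 2) = ε / 4 * t * (‖z.1‖ ^ 2 + ‖z.2‖ ^ 2) := by
      rw [sq, ← mul_assoc, hte]
    nlinarith
  rw [ha, EReal.coe_le_coe_iff, sub_le_comm, le_div_iff₀ ht0]
  linarith

lemma IsASDH.ne_top (hASD : IsASDH L) (hε : 0 < ε) {C : ℝ}
    (hC : ∀ z : H × H, ((ε / 4 * (‖z.1‖ ^ 2 + ‖z.2‖ ^ 2) - C : ℝ) : EReal) ≤ L z) (z : H × H) :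
    L z ≠ ⊤ := by
  refine ne_top_of_le_ne_top (EReal.coe_ne_top ((‖z.1‖ ^ 2 + ‖z.2‖ ^ 2) / ε + C)) ?_
  rw [hASD.apply_eq_dual]
  refine iSup₂_le fun x p => ?_
  calc ((⟪-z.2, x⟫ + ⟪-z.1, p⟫ : ℝ) : EReal) - L (x, p)
      ≤ ((⟪-z.2, x⟫ + ⟪-z.1, p⟫ : ℝ) : EReal) - ((ε / 4 * (‖x‖ ^ 2 + ‖p‖ ^ 2) - C : ℝ) : EReal) :=
        EReal.sub_le_sub le_rfl (hC (x, p))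
    _ ≤ _ := by
      rw [← EReal.coe_sub, EReal.coe_le_coe_iff, add_div]
      have h1 := real_inner_le_sq_div_add hε (-z.2) x
      have h2 := real_inner_le_sq_div_add hε (-z.1) p
      rw [norm_neg] at h1 h2
      linarith

end Lagrangian

section RealLagrangian
variable {H : Type*} [NormedAddCommGroup H] [InnerProductSpace ℝ H] {l : H × H → ℝ} {ε : ℝ}

lemma isLUB_of_lagrangianDualH_eq {L : H × H → EReal} (hL : ∀ z, L z = l z) {q y : H} {c : ℝ}
    (h : lagrangianDualH L q y = c) :
    IsLUB (range fun z : H × H => ⟪q, z.1⟫ + ⟪y, z.2⟫ - l z) c := by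
  refine ⟨?_, fun b hb => ?_⟩
  · rintro _ ⟨z, rfl⟩
    have := le_lagrangianDualH L q y z.1 z.2
    rwa [h, hL, ← EReal.coe_sub, EReal.coe_le_coe_iff] at this
  · have : lagrangianDualH L q y ≤ b := iSup₂_le fun x p => by
      rw [hL, ← EReal.coe_sub, EReal.coe_le_coe_iff]
      exact hb ⟨(x, p), rfl⟩
    rwa [h, EReal.coe_le_coe_iff] at this

/-- The conjugate `g` of an `ε`-strongly convex function is `1/ε`-smooth: writing
`‖u‖²/(2ε) - ⟪u, z⟫ + l z = ‖u - ε z‖²/(2ε) + (l z - ε‖z‖²/2)` exhibits `‖u‖²/(2ε) - g u`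
as the partial minimum of a jointly convex function. -/
lemma convexOn_sq_div_sub_of_isLUB {g : H × H → ℝ} (hε : 0 < ε)
    (hl : ConvexOn ℝ univ fun z : H × H => l z - ε / 2 * (‖z.1‖ ^ 2 + ‖z.2‖ ^ 2))
    (hg : ∀ u : H × H, IsLUB (range fun z : H × H => ⟪u.1, z.1⟫ + ⟪u.2, z.2⟫ - l z) (g u)) :
    ConvexOn ℝ univ fun u : H × H => (‖u.1‖ ^ 2 + ‖u.2‖ ^ 2) / (2 * ε) - g u := by
  set Φ : (H × H) × (H × H) → ℝ := fun w =>
    (‖w.1.1 - ε • w.2.1‖ ^ 2 + ‖w.1.2 - ε • w.2.2‖ ^ 2) / (2 * ε)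
      + (l w.2 - ε / 2 * (‖w.2.1‖ ^ 2 + ‖w.2.2‖ ^ 2))
  have hΦ_eq : ∀ u z : H × H, Φ (u, z) =
      (‖u.1‖ ^ 2 + ‖u.2‖ ^ 2) / (2 * ε) - (⟪u.1, z.1⟫ + ⟪u.2, z.2⟫ - l z) := by
    intro u z
    simp only [Φ, norm_sub_sq_real, norm_smul, inner_smul_right, Real.norm_eq_abs,
      abs_of_pos hε, mul_pow]
    field_simp
    ring
  have hsq : ∀ A : (H × H) × (H × H) →ₗ[ℝ] H, ConvexOn ℝ univ fun w => ‖A w‖ ^ 2 := fun A =>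
    (convexOn_univ_norm.pow (fun _ _ => norm_nonneg _) 2).comp_linearMap A
  have hΦ : ConvexOn ℝ univ Φ := by
    have h1 := ((hsq (LinearMap.fst ℝ H H ∘ₗ LinearMap.fst ℝ _ _
      - ε • (LinearMap.fst ℝ H H ∘ₗ LinearMap.snd ℝ _ _))).add
      (hsq (LinearMap.snd ℝ H H ∘ₗ LinearMap.fst ℝ _ _
      - ε • (LinearMap.snd ℝ H H ∘ₗ LinearMap.snd ℝ _ _)))).smul
      (by positivity : 0 ≤ 1 / (2 * ε))
    have h2 := hl.comp_linearMap (LinearMap.snd ℝ (H × H) (H × H))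
    rw [preimage_univ] at h2
    refine (h1.add h2).congr fun w _ => ?_
    simp [Φ, div_eq_inv_mul]
  refine hΦ.of_isGLB_range fun u => ⟨?_, fun b hb => ?_⟩
  · rintro _ ⟨z, rfl⟩
    simp only [hΦ_eq]
    linarith [(hg u).1 ⟨z, rfl⟩]
  · have : g u ≤ (‖u.1‖ ^ 2 + ‖u.2‖ ^ 2) / (2 * ε) - b := (hg u).2 <| by
      rintro _ ⟨z, rfl⟩
      have := hb ⟨z, rfl⟩
      simp only [hΦ_eq] at this
      linarith
    linarith

lemma convexOn_sq_div_sub_of_isLUB_neg_swap (hε : 0 < ε)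
    (hl : ConvexOn ℝ univ fun z : H × H => l z - ε / 2 * (‖z.1‖ ^ 2 + ‖z.2‖ ^ 2))
    (hdual : ∀ q y : H, IsLUB (range fun z : H × H => ⟪q, z.1⟫ + ⟪y, z.2⟫ - l z) (l (-y, -q))) :
    ConvexOn ℝ univ fun z : H × H => (‖z.1‖ ^ 2 + ‖z.2‖ ^ 2) / (2 * ε) - l z := by
  have h := (convexOn_sq_div_sub_of_isLUB (g := fun u => l (-u.2, -u.1)) hε hl
    fun u => hdual u.1 u.2).comp_linearMap (-(LinearMap.snd ℝ H H).prod (LinearMap.fst ℝ H H))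
  rw [preimage_univ] at h
  refine h.congr fun z _ => ?_
  simp [add_comm]

lemma strongConvexOn_slice
    (hl : ConvexOn ℝ univ fun z : H × H => l z - ε / 2 * (‖z.1‖ ^ 2 + ‖z.2‖ ^ 2)) (u x : H) :
    StrongConvexOn univ ε fun p => l (u, p) - ⟪x, p⟫ := by
  refine strongConvexOn_iff_convex.2 ⟨convex_univ, fun p _ q _ a b ha hb hab => ?_⟩
  have h := hl.2 (mem_univ (u, p)) (mem_univ (u, q)) ha hb hab
  have hpt : a • (u, p) + b • (u, q) = (u, a • p + b • q) := by
    simp [← add_smul, hab]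
  have hu : a * (ε / 2 * ‖u‖ ^ 2) + b * (ε / 2 * ‖u‖ ^ 2) = ε / 2 * ‖u‖ ^ 2 := by
    rw [← add_mul, hab, one_mul]
  rw [hpt] at h
  simp only [smul_eq_mul, inner_add_right, inner_smul_right] at h ⊢
  linarith

/-- The pairs `(u₁, v), (u₂, v')` and `(u₁, v'), (u₂, v)` have the same midpoint. -/
lemma mixed_sub_le (hε : 0 < ε)
    (hl : ConvexOn ℝ univ fun z : H × H => l z - ε / 2 * (‖z.1‖ ^ 2 + ‖z.2‖ ^ 2))
    (hsmooth : ConvexOn ℝ univ fun z : H × H => (‖z.1‖ ^ 2 + ‖z.2‖ ^ 2) / (2 * ε) - l z)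
    (u₁ u₂ v v' : H) :
    l (u₁, v') + l (u₂, v) - l (u₁, v) - l (u₂, v') ≤ (‖u₁ - u₂‖ ^ 2 + ‖v' - v‖ ^ 2) / (4 * ε) := by
  have hhalf : (0 : ℝ) ≤ 1 / 2 := by norm_num
  have hconv := hl.2 (mem_univ (u₁, v)) (mem_univ (u₂, v')) hhalf hhalf (add_halves 1)
  have hsm := hsmooth.2 (mem_univ (u₁, v')) (mem_univ (u₂, v)) hhalf hhalf (add_halves 1)
  simp only [Prod.smul_mk, Prod.mk_add_mk, smul_eq_mul] at hconv hsm
  rw [add_comm ((1 / 2 : ℝ) • v')] at hsm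
  rw [norm_half_smul_add_half_smul_sq, norm_half_smul_add_half_smul_sq] at hconv hsm
  rw [norm_sub_rev v' v]
  have hA : 0 ≤ ε * (‖u₁ - u₂‖ ^ 2 + ‖v - v'‖ ^ 2) := by positivity
  simp only [div_eq_mul_inv, mul_inv] at hconv hsm ⊢
  linarith

lemma exists_forall_sub_inner_le [CompleteSpace H] (hε : 0 < ε)
    (hl : ConvexOn ℝ univ fun z : H × H => l z - ε / 2 * (‖z.1‖ ^ 2 + ‖z.2‖ ^ 2))
    (hlsc : LowerSemicontinuous l) {C : ℝ}
    (hC : ∀ z : H × H, ε / 4 * (‖z.1‖ ^ 2 + ‖z.2‖ ^ 2) - C ≤ l z)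
    (u x : H) : ∃ v, ∀ p, l (u, v) - ⟪x, v⟫ ≤ l (u, p) - ⟪x, p⟫ := by
  refine (strongConvexOn_slice hl u x).exists_forall_le hε ?_ ⟨-C - ‖x‖ ^ 2 / ε, ?_⟩
  · exact (hlsc.comp (continuous_const.prodMk continuous_id)).add
      (continuous_const.inner continuous_id).neg.lowerSemicontinuous
  · rintro _ ⟨p, rfl⟩
    have := hC (u, p)
    have := real_inner_le_sq_div_add hε x p
    have : 0 ≤ ε / 4 * ‖u‖ ^ 2 := by positivity
    dsimp only at *
    linarith

lemma memSubdiff2_iff {L : H × H → EReal} (hL : ∀ z, L z = l z) (u v x : H) :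
    MemSubdiff2 L u v x ↔ ∀ r, l (u, v) - ⟪x, v⟫ ≤ l (u, r) - ⟪x, r⟫ := by
  refine forall_congr' fun r => ?_
  rw [hL, hL, ← EReal.coe_add, EReal.coe_le_coe_iff, inner_sub_right]
  constructor <;> intro h <;> linarith

/-- Comparing the minimality of `R u₁ x₁` and `R u₂ x₂` bounds the mixed difference of `l` at
these points from below by `ε d²/2 - ‖x₁ - x₂‖ d`, where `d = ‖R u₁ x₁ - R u₂ x₂‖`; summing
`mixed_sub_le` over `n` equal steps from one point to the other bounds it from above by
`n ‖u₁ - u₂‖²/(4ε) + d²/(4εn)`, and `n ε² > 1` makes the second term at most `ε d²/4`. -/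
lemma sq_norm_sub_le_of_forall_sub_inner_le (hε : 0 < ε)
    (hl : ConvexOn ℝ univ fun z : H × H => l z - ε / 2 * (‖z.1‖ ^ 2 + ‖z.2‖ ^ 2))
    (hsmooth : ConvexOn ℝ univ fun z : H × H => (‖z.1‖ ^ 2 + ‖z.2‖ ^ 2) / (2 * ε) - l z)
    {R : H → H → H} (hR : ∀ u x p, l (u, R u x) - ⟪x, R u x⟫ ≤ l (u, p) - ⟪x, p⟫)
    {n : ℕ} (hn : 1 < n * ε ^ 2) (u₁ x₁ u₂ x₂ : H) :
    ‖R u₁ x₁ - R u₂ x₂‖ ^ 2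
      ≤ n / ε ^ 2 * ‖u₁ - u₂‖ ^ 2 + 4 * ‖x₁ - x₂‖ / ε * ‖R u₁ x₁ - R u₂ x₂‖ := by
  set v₁ := R u₁ x₁
  set v₂ := R u₂ x₂
  set a := ‖u₁ - u₂‖
  set b := ‖x₁ - x₂‖
  set d := ‖v₁ - v₂‖
  have hn0 : (0 : ℝ) < n := by
    by_contra! h
    nlinarith [sq_nonneg ε]
  have hg₁ := (strongConvexOn_slice hl u₁ x₁).add_sq_le_of_forall_le (hR u₁ x₁) v₂
  have hg₂ := (strongConvexOn_slice hl u₂ x₂).add_sq_le_of_forall_le (hR u₂ x₂) v₁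
  rw [norm_sub_rev] at hg₁
  have hcs : -(b * d) ≤ ⟪x₁, v₂⟫ - ⟪x₁, v₁⟫ - ⟪x₂, v₂⟫ + ⟪x₂, v₁⟫ := by
    have h := neg_le_of_abs_le (abs_real_inner_le_norm (x₁ - x₂) (v₂ - v₁))
    rw [norm_sub_rev v₂, inner_sub_left, inner_sub_right, inner_sub_right] at h
    linarith
  have htel := sub_le_of_forall_sub_le (φ := fun w => l (u₁, w) - l (u₂, w))
    (A := a ^ 2 / (4 * ε)) (B := 1 / (4 * ε)) (fun w w' => by
      have := mixed_sub_le hε hl hsmooth u₁ u₂ w w'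
      simp only [div_eq_mul_inv, one_mul] at this ⊢
      linarith) v₁ v₂ (n := n) (by exact_mod_cast hn0.ne')
  rw [norm_sub_rev] at htel
  have hsmall : 1 / (4 * ε) * d ^ 2 / n ≤ ε / 4 * d ^ 2 := by
    rw [div_le_iff₀ hn0]
    have : 0 ≤ 1 / (4 * ε) * d ^ 2 * (n * ε ^ 2 - 1) := mul_nonneg (by positivity) (by linarith)
    field_simp at this ⊢
    linarith
  have h : ε / 4 * d ^ 2 ≤ b * d + n * (a ^ 2 / (4 * ε)) := by
    linarith
  field_simp at h ⊢
  linarith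

lemma exists_lipschitz_of_forall_sub_inner_le (hε : 0 < ε)
    (hl : ConvexOn ℝ univ fun z : H × H => l z - ε / 2 * (‖z.1‖ ^ 2 + ‖z.2‖ ^ 2))
    (hsmooth : ConvexOn ℝ univ fun z : H × H => (‖z.1‖ ^ 2 + ‖z.2‖ ^ 2) / (2 * ε) - l z)
    {R : H → H → H} (hR : ∀ u x p, l (u, R u x) - ⟪x, R u x⟫ ≤ l (u, p) - ⟪x, p⟫) :
    ∃ K : ℝ, 0 < K ∧ ∀ u₁ x₁ u₂ x₂ : H,
      ‖R u₁ x₁ - R u₂ x₂‖ ≤ K * (‖u₁ - u₂‖ + ‖x₁ - x₂‖) := by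
  obtain ⟨n, hn⟩ := exists_nat_gt (1 / ε ^ 2)
  have hnε : 1 < n * ε ^ 2 := by rwa [div_lt_iff₀ (by positivity)] at hn
  refine ⟨1 + n / ε ^ 2 + 4 / ε, by positivity, fun u₁ x₁ u₂ x₂ => ?_⟩
  have ha := norm_nonneg (u₁ - u₂)
  have hb := norm_nonneg (x₁ - x₂)
  calc ‖R u₁ x₁ - R u₂ x₂‖ ≤ (1 + n / ε ^ 2) * ‖u₁ - u₂‖ + 4 * ‖x₁ - x₂‖ / ε :=
        le_of_sq_le_mul_sq_add_mul (by positivity) ha (by positivity)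
          (sq_norm_sub_le_of_forall_sub_inner_le hε hl hsmooth hR hnε u₁ x₁ u₂ x₂)
    _ ≤ (1 + n / ε ^ 2 + 4 / ε) * (‖u₁ - u₂‖ + ‖x₁ - x₂‖) := by
      rw [mul_div_right_comm]
      nlinarith [mul_nonneg (by positivity : (0 : ℝ) ≤ n / ε ^ 2) hb,
        mul_nonneg (by positivity : (0 : ℝ) ≤ 4 / ε) ha]

end RealLagrangian

theorem stmt7_general {H : Type*} [NormedAddCommGroup H] [InnerProductSpace ℝ H] [CompleteSpace H]
    (L : H × H → EReal)
    (hlsc : LowerSemicontinuous L)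
    (hproper : ∃ z, L z ≠ ⊤) (hreal : ∀ z, L z ≠ ⊥)
    (hASD : IsASDH L)
    (ε : ℝ) (hε : 0 < ε)
    (hunif : ERealConvexOn (fun zp : H × H =>
      L zp - ((ε / 2 * (‖zp.1‖ ^ 2 + ‖zp.2‖ ^ 2) : ℝ) : EReal))) :
    ∃ R : H → H → H,
      (∀ u x : H, MemSubdiff2 L u (R u x) x ∧ ∀ v : H, MemSubdiff2 L u v x → v = R u x) ∧
      (∃ K : ℝ, 0 < K ∧ ∀ u₁ x₁ u₂ x₂ : H,
        ‖R u₁ x₁ - R u₂ x₂‖ ≤ K * (‖u₁ - u₂‖ + ‖x₁ - x₂‖)) := by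
  obtain ⟨z₀, hz₀⟩ := hproper
  obtain ⟨C, hC⟩ := hASD.exists_quadratic_lower_bound hreal hε hunif hz₀
  set l : H × H → ℝ := fun z => (L z).toReal
  have hL : ∀ z, L z = l z := fun z => (EReal.coe_toReal (hASD.ne_top hε hC z) (hreal z)).symm
  have hl : ConvexOn ℝ univ fun z : H × H => l z - ε / 2 * (‖z.1‖ ^ 2 + ‖z.2‖ ^ 2) :=
    ERealConvexOn.convexOn_univ (by simpa only [hL, EReal.coe_sub] using hunif)
  have hsmooth := convexOn_sq_div_sub_of_isLUB_neg_swap hε hl fun q y =>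
    isLUB_of_lagrangianDualH_eq hL ((hASD q y).trans (hL _))
  have hllsc : LowerSemicontinuous l := .of_coe_ereal (funext hL ▸ hlsc)
  choose R hR using exists_forall_sub_inner_le hε hl hllsc (C := C)
    fun z => EReal.coe_le_coe_iff.1 (hL z ▸ hC z)
  refine ⟨R, fun u x => ⟨(memSubdiff2_iff hL u (R u x) x).2 (hR u x), fun v hv => ?_⟩,
    exists_lipschitz_of_forall_sub_inner_le hε hl hsmooth hR⟩
  exact ((strongConvexOn_slice hl u x).strictConvexOn hε).eq_of_isMinOn
    (isMinOn_univ_iff.2 ((memSubdiff2_iff hL u v x).1 hv)) (isMinOn_univ_iff.2 (hR u x))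
    trivial trivial

/-- an ASD Lagrangian uniformly convex in both variables admits, for each
`(u,x)`, a unique `v = R(u,x)` with `x ∈ ∂₂L(u,v)`, and `R` is jointly Lipschitz. -/
theorem stmt7 {H : Type*} [NormedAddCommGroup H] [InnerProductSpace ℝ H] [CompleteSpace H]
    (L : H × H → EReal)
    (hconv : ERealConvexOn L)
    (hlsc : LowerSemicontinuous L)
    (hproper : ∃ z, L z ≠ ⊤) (hreal : ∀ z, L z ≠ ⊥)
    (hASD : IsASDH L)
    (ε : ℝ) (hε : 0 < ε)
    (hunif : ERealConvexOn (fun zp : H × H =>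
      L zp - ((ε / 2 * (‖zp.1‖ ^ 2 + ‖zp.2‖ ^ 2) : ℝ) : EReal))) :
    ∃ R : H → H → H,
      (∀ u x : H, MemSubdiff2 L u (R u x) x ∧ ∀ v : H, MemSubdiff2 L u v x → v = R u x) ∧
      (∃ K : ℝ, 0 < K ∧ ∀ u₁ x₁ u₂ x₂ : H,
        ‖R u₁ x₁ - R u₂ x₂‖ ≤ K * (‖u₁ - u₂‖ + ‖x₁ - x₂‖)) :=
  stmt7_general L hlsc hproper hreal hASD ε hε hunif
end
end
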